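/- arXiv:1505.07634 — 5 statements merged into one kernel-verified Lean document; each statement's English description precedes it below -/
import Mathlib

section
/- For any loss ℓ : {±1} × ℝ → ℝ, any ρ ∈ [0, 1/2), any distribution D, and any scorer s : X → ℝ, the ℓ-risk of s on D equals the ℓ̄-risk of s on SLN(D, ρ), where ℓ̄(y, v) = [(1 − ρ)·ℓ(y, v) − ρ·ℓ(−y, v)]/(1 − 2ρ). -/
open MeasureTheory

/-- In the conditional risk at a point with `P(Y = 1) = η`, flipping labels with probability `ρ`
and correcting the loss cancel: the coefficient of `ℓ(1, v)` on the right is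
`(((1 - 2ρ)η + ρ)(1 - ρ) - ((1 - 2ρ)(1 - η) + ρ)ρ) / (1 - 2ρ) = η`. -/
theorem conditional_risk_eq_noise_corrected {K : Type*} [Field K] {ρ : K} (hρ : 1 - 2 * ρ ≠ 0)
    (η a b : K) :
    η * a + (1 - η) * b =
      ((1 - 2 * ρ) * η + ρ) * (((1 - ρ) * a - ρ * b) / (1 - 2 * ρ)) +
        (1 - ((1 - 2 * ρ) * η + ρ)) * (((1 - ρ) * b - ρ * a) / (1 - 2 * ρ)) := by
  field_simp
  ring

theorem risk_eq_noise_corrected_risk_general {X : Type*} [MeasurableSpace X]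
    (M : Measure X)
    (η : X → ℝ)
    (ℓ : ℝ → ℝ → ℝ) (ρ : ℝ) (hρ : ρ ∈ Set.Ico (0 : ℝ) (1/2)) (s : X → ℝ) :
    ∫ x, (η x * ℓ 1 (s x) + (1 - η x) * ℓ (-1) (s x)) ∂M =
      ∫ x, (((1 - 2 * ρ) * η x + ρ) *
              (((1 - ρ) * ℓ 1 (s x) - ρ * ℓ (-1) (s x)) / (1 - 2 * ρ)) +
            (1 - ((1 - 2 * ρ) * η x + ρ)) *
              (((1 - ρ) * ℓ (-1) (s x) - ρ * ℓ 1 (s x)) / (1 - 2 * ρ))) ∂M := by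
  have hρ' : 1 - 2 * ρ ≠ 0 := by linarith [hρ.2]
  simp_rw [← conditional_risk_eq_noise_corrected hρ']

/-- the ℓ-risk of a scorer s on the clean distribution D = (M, η)
equals the ℓ̄-risk of s on SLN(D, ρ) = (M, η̄), where
ℓ̄(y,v) = ((1−ρ)ℓ(y,v) − ρℓ(−y,v))/(1−2ρ) and η̄ = (1−2ρ)η + ρ.
Risks are written by conditioning on the label: L^D_ℓ(s) =
∫ η(x)·ℓ(1, s(x)) + (1−η(x))·ℓ(−1, s(x)) dM(x). -/
theorem risk_eq_noise_corrected_risk {X : Type*} [MeasurableSpace X]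
    (M : Measure X) [IsProbabilityMeasure M]
    (η : X → ℝ) (hη : ∀ x, η x ∈ Set.Icc (0 : ℝ) 1)
    (ℓ : ℝ → ℝ → ℝ) (ρ : ℝ) (hρ : ρ ∈ Set.Ico (0 : ℝ) (1/2)) (s : X → ℝ) :
    ∫ x, (η x * ℓ 1 (s x) + (1 - η x) * ℓ (-1) (s x)) ∂M =
      ∫ x, (((1 - 2 * ρ) * η x + ρ) *
              (((1 - ρ) * ℓ 1 (s x) - ρ * ℓ (-1) (s x)) / (1 - 2 * ρ)) +
            (1 - ((1 - 2 * ρ) * η x + ρ)) *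
              (((1 - ρ) * ℓ (-1) (s x) - ρ * ℓ 1 (s x)) / (1 - 2 * ρ))) ∂M :=
  risk_eq_noise_corrected_risk_general M η ℓ ρ hρ s
end

section
/- For the unhinged loss ℓ and any bounded function class F_B = {s : X → ℝ | sup_x |s(x)| ≤ B} with B ≥ 1, and any scorer s ∈ F_B, the 0-1 regret of s over F_B is bounded by the unhinged regret: regret_{01}(s) ≤ regret_{unh}(s), where regret_ℓ(s) = L^D_ℓ(s) − inf_{t ∈ F_B} L^D_ℓ(t). -/
open MeasureTheory

/-- The 0-1 risk of a scorer s on D = (M, η), conditioning on the label: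
ℓ01(1,v) = 1[v<0] + ½·1[v=0], ℓ01(−1,v) = 1[v>0] + ½·1[v=0]. -/
noncomputable def zeroOneRisk {X : Type*} [MeasurableSpace X]
    (M : Measure X) (η : X → ℝ) (s : X → ℝ) : ℝ :=
  ∫ x, (η x * ((if s x < 0 then (1:ℝ) else 0) + (if s x = 0 then 1/2 else 0)) +
        (1 - η x) * ((if 0 < s x then (1:ℝ) else 0) + (if s x = 0 then 1/2 else 0))) ∂M

/-- The unhinged risk of a scorer s on D = (M, η). -/
noncomputable def unhingedRisk {X : Type*} [MeasurableSpace X]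
    (M : Measure X) (η : X → ℝ) (s : X → ℝ) : ℝ :=
  ∫ x, (η x * (1 - s x) + (1 - η x) * (1 + s x)) ∂M

/-!
Over the class of bounded measurable scorers, both risks are minimized by the single scorer
`x ↦ B · sign (2η(x) − 1)`, since it minimizes the conditional risk at every point. So both regrets
are integrals of pointwise excess conditional risks. Writing the conditional unhinged risk as
`1 − (2η − 1) v`, its excess is `B |2η − 1| − (2η − 1) v ≥ 0`. The conditional 0-1 excess vanishes
when `v` has the sign of `2η − 1` and is at most `|2η − 1|` otherwise, where the unhinged excess
is at least `B |2η − 1| ≥ |2η − 1|`.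
-/

noncomputable def zeroOneCondRisk (η v : ℝ) : ℝ :=
  η * ((if v < 0 then (1:ℝ) else 0) + (if v = 0 then 1/2 else 0)) +
    (1 - η) * ((if 0 < v then (1:ℝ) else 0) + (if v = 0 then 1/2 else 0))

def unhingedCondRisk (η v : ℝ) : ℝ :=
  η * (1 - v) + (1 - η) * (1 + v)

lemma Real.self_mul_sign (r : ℝ) : r * Real.sign r = |r| := by
  rcases lt_trichotomy r 0 with h | rfl | h
  · rw [Real.sign_of_neg h, abs_of_neg h, mul_neg_one]
  · simp
  · rw [Real.sign_of_pos h, abs_of_pos h, mul_one]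

lemma abs_mul_sign_le {B : ℝ} (hB : 0 ≤ B) (r : ℝ) : |B * Real.sign r| ≤ B := by
  rw [abs_mul, abs_of_nonneg hB]
  refine mul_le_of_le_one_right hB ?_
  rcases Real.sign_apply_eq r with h | h | h <;> simp [h]

section ZeroOne

variable {η v : ℝ}

lemma zeroOneCondRisk_of_neg (h : v < 0) : zeroOneCondRisk η v = η := by
  simp [zeroOneCondRisk, h, h.ne, h.not_gt]

lemma zeroOneCondRisk_zero (η : ℝ) : zeroOneCondRisk η 0 = 1 / 2 := by
  simp only [zeroOneCondRisk, lt_irrefl, if_false, if_true]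
  ring

lemma zeroOneCondRisk_of_pos (h : 0 < v) : zeroOneCondRisk η v = 1 - η := by
  simp [zeroOneCondRisk, h, h.ne', h.not_gt]

lemma min_le_zeroOneCondRisk (η v : ℝ) : min η (1 - η) ≤ zeroOneCondRisk η v := by
  rcases lt_trichotomy v 0 with h | rfl | h
  · exact (zeroOneCondRisk_of_neg h).symm ▸ min_le_left _ _
  · rw [zeroOneCondRisk_zero]
    linarith [min_le_left η (1 - η), min_le_right η (1 - η)]
  · exact (zeroOneCondRisk_of_pos h).symm ▸ min_le_right _ _

lemma zeroOneCondRisk_of_mul_pos (h : 0 < (2 * η - 1) * v) :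
    zeroOneCondRisk η v = min η (1 - η) := by
  rcases pos_and_pos_or_neg_and_neg_of_mul_pos h with ⟨hη, hv⟩ | ⟨hη, hv⟩
  · rw [zeroOneCondRisk_of_pos hv, min_eq_right (by linarith)]
  · rw [zeroOneCondRisk_of_neg hv, min_eq_left (by linarith)]

lemma zeroOneCondRisk_sub_min_le_abs (η v : ℝ) :
    zeroOneCondRisk η v - min η (1 - η) ≤ |2 * η - 1| := by
  have := le_abs_self (2 * η - 1)
  have := neg_abs_le (2 * η - 1)
  rcases lt_trichotomy v 0 with h | rfl | h <;>
    [rw [zeroOneCondRisk_of_neg h]; rw [zeroOneCondRisk_zero]; rw [zeroOneCondRisk_of_pos h]] <;>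
    rcases min_cases η (1 - η) with ⟨_, _⟩ | ⟨_, _⟩ <;>
    linarith

lemma zeroOneCondRisk_mul_sign {B : ℝ} (hB : 0 < B) (η : ℝ) :
    zeroOneCondRisk η (B * Real.sign (2 * η - 1)) = min η (1 - η) := by
  rcases eq_or_ne (2 * η - 1) 0 with h | h
  · obtain rfl : η = 1 / 2 := by linarith
    norm_num [zeroOneCondRisk_zero]
  · refine zeroOneCondRisk_of_mul_pos ?_
    rw [mul_left_comm, Real.self_mul_sign]
    exact mul_pos hB (abs_pos.2 h)

lemma abs_zeroOneCondRisk_le_one (h₀ : 0 ≤ η) (h₁ : η ≤ 1) (v : ℝ) :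
    |zeroOneCondRisk η v| ≤ 1 := by
  rw [abs_le]
  rcases lt_trichotomy v 0 with h | rfl | h
  · rw [zeroOneCondRisk_of_neg h]; constructor <;> linarith
  · rw [zeroOneCondRisk_zero]; norm_num
  · rw [zeroOneCondRisk_of_pos h]; constructor <;> linarith

end ZeroOne

section Unhinged

variable {η v B : ℝ}

lemma unhingedCondRisk_eq (η v : ℝ) : unhingedCondRisk η v = 1 - (2 * η - 1) * v := by
  unfold unhingedCondRisk; ring

lemma one_sub_mul_abs_le_unhingedCondRisk (hv : |v| ≤ B) :
    1 - B * |2 * η - 1| ≤ unhingedCondRisk η v := by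
  rw [unhingedCondRisk_eq, sub_le_sub_iff_left]
  calc (2 * η - 1) * v ≤ |2 * η - 1| * |v| := (le_abs_self _).trans (abs_mul _ _).le
    _ ≤ |2 * η - 1| * B := mul_le_mul_of_nonneg_left hv (abs_nonneg _)
    _ = B * |2 * η - 1| := mul_comm _ _

lemma unhingedCondRisk_mul_sign (B η : ℝ) :
    unhingedCondRisk η (B * Real.sign (2 * η - 1)) = 1 - B * |2 * η - 1| := by
  rw [unhingedCondRisk_eq, mul_left_comm, Real.self_mul_sign]

lemma abs_unhingedCondRisk_le (h₀ : 0 ≤ η) (h₁ : η ≤ 1) (hv : |v| ≤ B) :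
    |unhingedCondRisk η v| ≤ 1 + B := by
  have : |2 * η - 1| ≤ 1 := abs_le.2 ⟨by linarith, by linarith⟩
  rw [unhingedCondRisk_eq]
  calc |1 - (2 * η - 1) * v| ≤ |1| + |2 * η - 1| * |v| := by rw [← abs_mul]; exact abs_sub _ _
    _ ≤ 1 + 1 * B := by gcongr; simp
    _ = 1 + B := by ring

end Unhinged

lemma zeroOneCondRisk_sub_min_le {η v B : ℝ} (hB : 1 ≤ B) (hv : |v| ≤ B) :
    zeroOneCondRisk η v - min η (1 - η) ≤ unhingedCondRisk η v - (1 - B * |2 * η - 1|) := by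
  by_cases h : 0 < (2 * η - 1) * v
  · rw [zeroOneCondRisk_of_mul_pos h, sub_self, sub_nonneg]
    exact one_sub_mul_abs_le_unhingedCondRisk hv
  · rw [unhingedCondRisk_eq]
    calc zeroOneCondRisk η v - min η (1 - η) ≤ |2 * η - 1| := zeroOneCondRisk_sub_min_le_abs η v
      _ ≤ B * |2 * η - 1| := le_mul_of_one_le_left (abs_nonneg _) hB
      _ ≤ 1 - (2 * η - 1) * v - (1 - B * |2 * η - 1|) := by linarith [not_lt.1 h]

section Integrals

variable {X : Type*} [MeasurableSpace X] {M : Measure X} {η t : X → ℝ} {B : ℝ}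

lemma Measurable.zeroOneCondRisk (hη : Measurable η) (ht : Measurable t) :
    Measurable fun x => zeroOneCondRisk (η x) (t x) := by
  refine (hη.mul (.add ?_ ?_)).add ((measurable_const.sub hη).mul (.add ?_ ?_)) <;>
    refine .ite ?_ measurable_const measurable_const <;> measurability

lemma Measurable.unhingedCondRisk (hη : Measurable η) (ht : Measurable t) :
    Measurable fun x => unhingedCondRisk (η x) (t x) := by
  unfold _root_.unhingedCondRisk; fun_prop

variable [IsFiniteMeasure M]

lemma integrable_zeroOneCondRisk (hη : ∀ x, η x ∈ Set.Icc (0 : ℝ) 1) (hηm : Measurable η)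
    (ht : Measurable t) :
    Integrable (fun x => zeroOneCondRisk (η x) (t x)) M :=
  .of_bound (hηm.zeroOneCondRisk ht).aestronglyMeasurable 1
    (ae_of_all _ fun x => abs_zeroOneCondRisk_le_one (hη x).1 (hη x).2 (t x))

lemma integrable_unhingedCondRisk (hη : ∀ x, η x ∈ Set.Icc (0 : ℝ) 1) (hηm : Measurable η)
    (ht : Measurable t) (htB : ∀ x, |t x| ≤ B) :
    Integrable (fun x => unhingedCondRisk (η x) (t x)) M :=
  .of_bound (hηm.unhingedCondRisk ht).aestronglyMeasurable (1 + B)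
    (ae_of_all _ fun x => abs_unhingedCondRisk_le (hη x).1 (hη x).2 (htB x))

lemma isLeast_zeroOneRisk (hη : ∀ x, η x ∈ Set.Icc (0 : ℝ) 1) (hηm : Measurable η)
    (hB : 0 < B) (hbayes : Measurable fun x => B * Real.sign (2 * η x - 1)) :
    IsLeast {r : ℝ | ∃ t : X → ℝ, Measurable t ∧ (∀ x, |t x| ≤ B) ∧ r = zeroOneRisk M η t}
      (zeroOneRisk M η fun x => B * Real.sign (2 * η x - 1)) := by
  refine ⟨⟨_, hbayes, fun x => abs_mul_sign_le hB.le _, rfl⟩, ?_⟩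
  rintro _ ⟨t, ht, -, rfl⟩
  refine integral_mono (integrable_zeroOneCondRisk hη hηm hbayes)
    (integrable_zeroOneCondRisk hη hηm ht) fun x => ?_
  exact (zeroOneCondRisk_mul_sign hB (η x)).trans_le (min_le_zeroOneCondRisk _ _)

lemma isLeast_unhingedRisk (hη : ∀ x, η x ∈ Set.Icc (0 : ℝ) 1) (hηm : Measurable η)
    (hB : 0 ≤ B) (hbayes : Measurable fun x => B * Real.sign (2 * η x - 1)) :
    IsLeast {r : ℝ | ∃ t : X → ℝ, Measurable t ∧ (∀ x, |t x| ≤ B) ∧ r = unhingedRisk M η t}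
      (unhingedRisk M η fun x => B * Real.sign (2 * η x - 1)) := by
  have hbayesB (x : X) : |B * Real.sign (2 * η x - 1)| ≤ B := abs_mul_sign_le hB _
  refine ⟨⟨_, hbayes, hbayesB, rfl⟩, ?_⟩
  rintro _ ⟨t, ht, htB, rfl⟩
  refine integral_mono (integrable_unhingedCondRisk hη hηm hbayes hbayesB)
    (integrable_unhingedCondRisk hη hηm ht htB) fun x => ?_
  exact (unhingedCondRisk_mul_sign B (η x)).trans_le
    (one_sub_mul_abs_le_unhingedCondRisk (htB x))

end Integrals

/-- over the bounded function class F_B (B ≥ 1), the 0-1 regret of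
any scorer s ∈ F_B is bounded by its unhinged regret, provided the scorer
x ↦ B·sign(2η(x) − 1) is measurable (hence lies in F_B). -/
theorem zero_one_regret_le_unhinged_regret {X : Type*} [MeasurableSpace X]
    (M : Measure X) [IsProbabilityMeasure M]
    (η : X → ℝ) (hη : ∀ x, η x ∈ Set.Icc (0 : ℝ) 1) (hηm : Measurable η)
    (B : ℝ) (hB : 1 ≤ B)
    (hbayes : Measurable fun x => B * Real.sign (2 * η x - 1))
    (s : X → ℝ) (hs : Measurable s) (hsB : ∀ x, |s x| ≤ B) :
    zeroOneRisk M η s -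
      sInf {r : ℝ | ∃ t : X → ℝ, Measurable t ∧ (∀ x, |t x| ≤ B) ∧
        r = zeroOneRisk M η t} ≤
    unhingedRisk M η s -
      sInf {r : ℝ | ∃ t : X → ℝ, Measurable t ∧ (∀ x, |t x| ≤ B) ∧
        r = unhingedRisk M η t} := by
  set t₀ : X → ℝ := fun x => B * Real.sign (2 * η x - 1)
  have ht₀B (x : X) : |t₀ x| ≤ B := abs_mul_sign_le (by linarith) _
  rw [(isLeast_zeroOneRisk hη hηm (by linarith) hbayes).csInf_eq,
    (isLeast_unhingedRisk hη hηm (by linarith) hbayes).csInf_eq]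
  have hs01 := integrable_zeroOneCondRisk (M := M) hη hηm hs
  have ht₀01 := integrable_zeroOneCondRisk (M := M) hη hηm hbayes
  have hsU := integrable_unhingedCondRisk (M := M) hη hηm hs hsB
  have ht₀U := integrable_unhingedCondRisk (M := M) hη hηm hbayes ht₀B
  calc zeroOneRisk M η s - zeroOneRisk M η t₀
      = ∫ x, (zeroOneCondRisk (η x) (s x) - zeroOneCondRisk (η x) (t₀ x)) ∂M :=
        (integral_sub hs01 ht₀01).symm
    _ ≤ ∫ x, (unhingedCondRisk (η x) (s x) - unhingedCondRisk (η x) (t₀ x)) ∂M := by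
        refine integral_mono (hs01.sub ht₀01) (hsU.sub ht₀U) fun x => ?_
        rw [zeroOneCondRisk_mul_sign (by linarith), unhingedCondRisk_mul_sign]
        exact zeroOneCondRisk_sub_min_le hB (hsB x)
    _ = unhingedRisk M η s - unhingedRisk M η t₀ := integral_sub hsU ht₀U
end

section
/- For the unhinged loss and any scorer s bounded by B, any distribution D and any ρ ∈ [0, 1/2), the unhinged regret on the clean distribution equals (1 − 2ρ)^{-1} times the unhinged regret on the corrupted distribution: regret^{D,F_B}_{unh}(s) = (1/(1 − 2ρ))·regret^{SLN(D,ρ),F_B}_{unh}(s). -/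
/-!
Symmetric label noise maps the class probability `η` to `(1 - 2ρ) η + ρ`, and the unhinged loss
is affine in the label, so the corrupted risk of every bounded scorer is `(1 - 2ρ)` times its clean
risk plus the constant `2ρ`. An increasing affine map commutes with the infimum over `F_B`, so the
constant cancels in the regret and only the factor `1 - 2ρ > 0` remains.
-/

open MeasureTheory

/-- The unhinged regret of s over the class of scorers bounded by B. -/
noncomputable def unhingedRegret {X : Type*} [MeasurableSpace X]
    (M : Measure X) (η : X → ℝ) (B : ℝ) (s : X → ℝ) : ℝ :=
  unhingedRisk M η s -
    sInf {r : ℝ | ∃ t : X → ℝ, Measurable t ∧ (∀ x, |t x| ≤ B) ∧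
      r = unhingedRisk M η t}

theorem Real.sInf_image_mul_add {S : Set ℝ} {c : ℝ} (hc : 0 ≤ c) (d : ℝ)
    (hS : S.Nonempty) (hbdd : BddBelow S) :
    sInf ((fun r => c * r + d) '' S) = c * sInf S + d :=
  (((monotone_id.const_mul hc).add_const d).map_csInf_of_continuousAt
    (by fun_prop) hS hbdd).symm

section Unhinged

variable {X : Type*} [MeasurableSpace X]

def boundedScorers (B : ℝ) : Set (X → ℝ) :=
  {t | Measurable t ∧ ∀ x, |t x| ≤ B}

theorem unhingedRegret_eq_sub_sInf_image (M : Measure X) (η : X → ℝ) (B : ℝ) (s : X → ℝ) :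
    unhingedRegret M η B s =
      unhingedRisk M η s - sInf (unhingedRisk M η '' boundedScorers B) := by
  unfold unhingedRegret boundedScorers
  congr 2
  ext r
  simp only [Set.mem_ofPred_eq, Set.mem_image, and_assoc, eq_comm]

variable {M : Measure X} {η : X → ℝ} {B : ℝ} {t : X → ℝ}

theorem integrable_unhinged_integrand [IsFiniteMeasure M] (hη : ∀ x, η x ∈ Set.Icc (0 : ℝ) 1)
    (hηm : Measurable η) (ht : t ∈ boundedScorers B) :
    Integrable (fun x => η x * (1 - t x) + (1 - η x) * (1 + t x)) M := by
  refine Integrable.mono' (integrable_const (1 + 3 * B)) (by have := ht.1; fun_prop)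
    (ae_of_all _ fun x => ?_)
  obtain ⟨hη0, hη1⟩ := hη x
  obtain ⟨htl, htu⟩ := abs_le.mp (ht.2 x)
  rw [Real.norm_eq_abs, abs_le]
  constructor <;> nlinarith

variable [IsProbabilityMeasure M]

theorem one_sub_le_unhingedRisk (hη : ∀ x, η x ∈ Set.Icc (0 : ℝ) 1) (hηm : Measurable η)
    (ht : t ∈ boundedScorers B) :
    1 - B ≤ unhingedRisk M η t := by
  have hmono : ∫ _, (1 - B) ∂M ≤ unhingedRisk M η t :=
    integral_mono (integrable_const _) (integrable_unhinged_integrand hη hηm ht) fun x => by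
      obtain ⟨hη0, hη1⟩ := hη x
      obtain ⟨htl, htu⟩ := abs_le.mp (ht.2 x)
      nlinarith
  simpa using hmono

theorem unhingedRisk_symmetricNoise (hη : ∀ x, η x ∈ Set.Icc (0 : ℝ) 1) (hηm : Measurable η)
    (ρ : ℝ) (ht : t ∈ boundedScorers B) :
    unhingedRisk M (fun x => (1 - 2 * ρ) * η x + ρ) t
      = (1 - 2 * ρ) * unhingedRisk M η t + 2 * ρ := by
  have hpoint : ∀ x, ((1 - 2 * ρ) * η x + ρ) * (1 - t x)
      + (1 - ((1 - 2 * ρ) * η x + ρ)) * (1 + t x)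
      = (1 - 2 * ρ) * (η x * (1 - t x) + (1 - η x) * (1 + t x)) + 2 * ρ := fun x => by ring
  simp only [unhingedRisk, hpoint]
  rw [integral_add ((integrable_unhinged_integrand hη hηm ht).const_mul _) (integrable_const _),
    integral_const_mul, integral_const]
  simp

end Unhinged

theorem unhinged_regret_clean_eq_corrupted_general {X : Type*} [MeasurableSpace X]
    (M : Measure X) [IsProbabilityMeasure M]
    (η : X → ℝ) (hη : ∀ x, η x ∈ Set.Icc (0 : ℝ) 1) (hηm : Measurable η)
    (ρ : ℝ) (hρ : ρ ∈ Set.Ico (0 : ℝ) (1/2))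
    (B : ℝ)
    (s : X → ℝ) (hs : Measurable s) (hsB : ∀ x, |s x| ≤ B) :
    unhingedRegret M η B s =
      (1 / (1 - 2 * ρ)) *
        unhingedRegret M (fun x => (1 - 2 * ρ) * η x + ρ) B s := by
  have hc : 0 < 1 - 2 * ρ := by linarith [hρ.2]
  have hsF : s ∈ boundedScorers B := ⟨hs, hsB⟩
  have hbdd : BddBelow (unhingedRisk M η '' boundedScorers B) := by
    refine ⟨1 - B, ?_⟩
    rintro _ ⟨t, ht, rfl⟩
    exact one_sub_le_unhingedRisk hη hηm ht
  have himage : unhingedRisk M (fun x => (1 - 2 * ρ) * η x + ρ) '' boundedScorers B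
      = (fun r => (1 - 2 * ρ) * r + 2 * ρ) '' (unhingedRisk M η '' boundedScorers B) := by
    rw [Set.image_image]
    exact Set.image_congr fun t ht => unhingedRisk_symmetricNoise hη hηm ρ ht
  rw [unhingedRegret_eq_sub_sInf_image, unhingedRegret_eq_sub_sInf_image, himage,
    Real.sInf_image_mul_add hc.le _ ((Set.nonempty_of_mem hsF).image _) hbdd,
    unhingedRisk_symmetricNoise hη hηm ρ hsF]
  field_simp
  ring

/-- the unhinged regret over F_B on the clean distribution
D = (M, η) equals (1 − 2ρ)⁻¹ times the unhinged regret on the corrupted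
distribution SLN(D, ρ) = (M, (1−2ρ)η + ρ). -/
theorem unhinged_regret_clean_eq_corrupted {X : Type*} [MeasurableSpace X]
    (M : Measure X) [IsProbabilityMeasure M]
    (η : X → ℝ) (hη : ∀ x, η x ∈ Set.Icc (0 : ℝ) 1) (hηm : Measurable η)
    (ρ : ℝ) (hρ : ρ ∈ Set.Ico (0 : ℝ) (1/2))
    (B : ℝ) (hB : 0 < B)
    (s : X → ℝ) (hs : Measurable s) (hsB : ∀ x, |s x| ≤ B) :
    unhingedRegret M η B s =
      (1 / (1 - 2 * ρ)) *
        unhingedRegret M (fun x => (1 - 2 * ρ) * η x + ρ) B s :=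
  unhinged_regret_clean_eq_corrupted_general M η hη hηm ρ hρ B s hs hsB
end

section
/- The label-weighted kernel mean map is preserved up to scaling under symmetric label noise: for any ρ ∈ [0, 1/2), E_{(X,Y)∼D}[Y·Φ(X)] = (1/(1 − 2ρ))·E_{(X,Y)∼SLN(D,ρ)}[Y·Φ(X)]. Consequently, the optimal regularised unhinged solutions on D and SLN(D,ρ) are positive-scalar multiples of each other. -/
open MeasureTheory

lemma two_mul_sln_sub_one (ρ t : ℝ) :
    2 * ((1 - 2 * ρ) * t + ρ) - 1 = (1 - 2 * ρ) * (2 * t - 1) := by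
  ring

lemma integral_sln_label_weighted {X E : Type*} [MeasurableSpace X] [NormedAddCommGroup E]
    [NormedSpace ℝ E] (M : Measure X) (Φ : X → E) (η : X → ℝ) (ρ : ℝ) :
    ∫ x, (2 * ((1 - 2 * ρ) * η x + ρ) - 1) • Φ x ∂M =
      (1 - 2 * ρ) • ∫ x, (2 * η x - 1) • Φ x ∂M := by
  simp_rw [two_mul_sln_sub_one, ← smul_smul]
  exact integral_smul _ _

theorem mean_map_preserved_under_sln_general {X H : Type*} [MeasurableSpace X]
    [NormedAddCommGroup H] [InnerProductSpace ℝ H]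
    (M : Measure X)
    (Φ : X → H) (η : X → ℝ)
    (ρ : ℝ) (hρ : ρ ∈ Set.Ico (0 : ℝ) (1/2))
    (lam : ℝ) :
    (∫ x, (2 * η x - 1) • Φ x ∂M) =
      (1 / (1 - 2 * ρ)) • ∫ x, (2 * ((1 - 2 * ρ) * η x + ρ) - 1) • Φ x ∂M ∧
    ∃ c : ℝ, 0 < c ∧
      lam⁻¹ • (∫ x, (2 * η x - 1) • Φ x ∂M) =
        c • (lam⁻¹ • ∫ x, (2 * ((1 - 2 * ρ) * η x + ρ) - 1) • Φ x ∂M) := by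
  have hpos : 0 < 1 - 2 * ρ := by linarith [hρ.2]
  have hmean : (∫ x, (2 * η x - 1) • Φ x ∂M) =
      (1 / (1 - 2 * ρ)) • ∫ x, (2 * ((1 - 2 * ρ) * η x + ρ) - 1) • Φ x ∂M := by
    rw [integral_sln_label_weighted, one_div, inv_smul_smul₀ hpos.ne']
  refine ⟨hmean, 1 / (1 - 2 * ρ), one_div_pos.mpr hpos, ?_⟩
  rw [hmean, smul_comm]

/-- the label-weighted kernel mean map, written via the marginal M
and class-probability as E_{X∼M}[(2η(X) − 1)·Φ(X)], is preserved up to the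
scaling 1/(1−2ρ) under symmetric label noise (η̄ = (1−2ρ)η + ρ); consequently
the optimal regularised unhinged solutions λ⁻¹·(mean) on the clean and
corrupted distributions are positive-scalar multiples of each other. -/
theorem mean_map_preserved_under_sln {X H : Type*} [MeasurableSpace X]
    [NormedAddCommGroup H] [InnerProductSpace ℝ H] [CompleteSpace H]
    (M : Measure X) [IsProbabilityMeasure M]
    (Φ : X → H) (η : X → ℝ) (hη : ∀ x, η x ∈ Set.Icc (0 : ℝ) 1)
    (hint : Integrable (fun x => (2 * η x - 1) • Φ x) M)
    (ρ : ℝ) (hρ : ρ ∈ Set.Ico (0 : ℝ) (1/2))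
    (lam : ℝ) (hlam : 0 < lam) :
    (∫ x, (2 * η x - 1) • Φ x ∂M) =
      (1 / (1 - 2 * ρ)) • ∫ x, (2 * ((1 - 2 * ρ) * η x + ρ) - 1) • Φ x ∂M ∧
    ∃ c : ℝ, 0 < c ∧
      lam⁻¹ • (∫ x, (2 * η x - 1) • Φ x ∂M) =
        c • (lam⁻¹ • ∫ x, (2 * ((1 - 2 * ρ) * η x + ρ) - 1) • Φ x ∂M) :=
  mean_map_preserved_under_sln_general M Φ η ρ hρ lam
end

section
/- In a Hilbert space H with feature map Φ bounded by R = sup_x ‖Φ(x)‖ < ∞: if the minimiser w* of the regularised hinge risk E[max(0, 1 − Y⟨w, Φ(X)⟩)] + (λ/2)‖w‖² satisfies ‖w*‖ ≤ 1/√λ, then for λ ≥ R², |⟨w*, Φ(x)⟩| ≤ 1 for all x ∈ X, so the hinge loss is active (i.e., max(0, 1 − Y⟨w*, Φ(x)⟩) = 1 − Y⟨w*, Φ(x)⟩) at every point, and hence w* coincides with the minimiser of the regularised unhinged risk E[1 − Y⟨w, Φ(X)⟩] + (λ/2)‖w‖². -/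
/-!
Since ‖w*‖ ≤ 1/√λ ≤ 1/R, Cauchy–Schwarz bounds every score of w* by 1, and for labels ±1
the hinge loss then agrees with the unhinged loss. The regularised unhinged objective is the
quadratic 1 - ⟪μ, w⟫ + λ/2 ‖w‖², where μ = E[YΦ(X)] is obtained by Riesz representation;
its minimiser μ/λ has norm at most R/λ ≤ 1/√λ, so its scores are bounded by 1 as well. On
the set of vectors with all scores bounded by 1 both objectives coincide, so
`unhinged(w*) = hinge(w*) ≤ hinge(μ/λ) = unhinged(μ/λ) ≤ unhinged(w)`.
-/

open MeasureTheory Set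
open scoped RealInnerProductSpace

section InnerProductSpace

variable {H : Type*} [NormedAddCommGroup H] [InnerProductSpace ℝ H]

lemma abs_inner_le_one_of_norm_le_inv_sqrt {w v : H} {R lam : ℝ} (hw : ‖w‖ ≤ 1 / √lam)
    (hv : ‖v‖ ≤ R) (hR : R ^ 2 ≤ lam) : |⟪w, v⟫| ≤ 1 :=
  calc |⟪w, v⟫| ≤ ‖w‖ * ‖v‖ := abs_real_inner_le_norm w v
    _ ≤ (√lam)⁻¹ * √lam := by
      rw [← one_div]
      exact mul_le_mul hw (hv.trans (Real.le_sqrt_of_sq_le hR)) (norm_nonneg v) (by positivity)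
    _ ≤ 1 := inv_mul_le_one_of_le₀ le_rfl (Real.sqrt_nonneg lam)

lemma isMinOn_half_mul_norm_sq_sub_inner (m : H) {lam : ℝ} (hlam : 0 < lam) :
    IsMinOn (fun w => lam / 2 * ‖w‖ ^ 2 - ⟪m, w⟫) univ (lam⁻¹ • m) := by
  refine isMinOn_iff.2 fun w _ => ?_
  have hgap : lam / 2 * ‖w‖ ^ 2 - ⟪m, w⟫ - (lam / 2 * ‖lam⁻¹ • m‖ ^ 2 - ⟪m, lam⁻¹ • m⟫) =
      lam / 2 * ‖w - lam⁻¹ • m‖ ^ 2 := by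
    rw [norm_sub_sq_real, norm_smul, real_inner_smul_right, real_inner_smul_right,
      real_inner_self_eq_norm_sq, real_inner_comm, Real.norm_of_nonneg (inv_pos.2 hlam).le]
    field_simp
    ring
  have : 0 ≤ lam / 2 * ‖w - lam⁻¹ • m‖ ^ 2 := by positivity
  linarith

end InnerProductSpace

section WeakMean

variable {Ω H : Type*} [MeasurableSpace Ω] [NormedAddCommGroup H] [InnerProductSpace ℝ H]
  [MeasurableSpace H] [BorelSpace H] {P : Measure Ω} {g : Ω → H} {C : ℝ}

lemma integrable_inner_of_norm_le [IsFiniteMeasure P] (hg : Measurable g)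
    (hgC : ∀ᵐ ω ∂P, ‖g ω‖ ≤ C) (w : H) : Integrable (fun ω => ⟪g ω, w⟫) P := by
  refine Integrable.mono' (integrable_const (C * ‖w‖))
    ((continuous_id.inner continuous_const).measurable.comp hg).aestronglyMeasurable ?_
  filter_upwards [hgC] with ω hω
  exact (norm_inner_le_norm _ _).trans (by gcongr)

/-- `m` comes from Riesz representation rather than as the Bochner integral of `g`, which would
need `g` to have separable range. -/
lemma exists_norm_le_inner_eq_integral_inner [CompleteSpace H] [IsProbabilityMeasure P]
    (hg : Measurable g) (hgC : ∀ᵐ ω ∂P, ‖g ω‖ ≤ C) :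
    ∃ m : H, ‖m‖ ≤ C ∧ ∀ w, ⟪m, w⟫ = ∫ ω, ⟪g ω, w⟫ ∂P := by
  have hC : 0 ≤ C := by
    obtain ⟨ω, hω⟩ := hgC.exists
    exact (norm_nonneg _).trans hω
  have hint := integrable_inner_of_norm_le hg hgC
  let L : H →ₗ[ℝ] ℝ :=
    { toFun := fun w => ∫ ω, ⟪g ω, w⟫ ∂P
      map_add' := fun v w => by
        simp only [inner_add_right]
        exact integral_add (hint v) (hint w)
      map_smul' := fun c w => by
        simp only [real_inner_smul_right, RingHom.id_apply, smul_eq_mul]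
        exact integral_const_mul c _ }
  have hL : ∀ w, ‖L w‖ ≤ C * ‖w‖ := fun w => by
    have hbound : ∀ᵐ ω ∂P, ‖⟪g ω, w⟫‖ ≤ C * ‖w‖ := by
      filter_upwards [hgC] with ω hω
      exact (norm_inner_le_norm _ _).trans (by gcongr)
    simpa [L] using norm_integral_le_of_norm_le_const hbound
  refine ⟨(InnerProductSpace.toDual ℝ H).symm (L.mkContinuous C hL), ?_, fun w => ?_⟩
  · rw [LinearIsometryEquiv.norm_map]
    exact L.mkContinuous_norm_le hC hL
  · rw [InnerProductSpace.toDual_symm_apply]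
    rfl

end WeakMean

section Svm

variable {X H : Type*} [MeasurableSpace X] [NormedAddCommGroup H] [InnerProductSpace ℝ H]

noncomputable def hingeObjective (D : Measure (X × ℝ)) (Φ : X → H) (lam : ℝ) (w : H) : ℝ :=
  (∫ p, max 0 (1 - p.2 * ⟪w, Φ p.1⟫) ∂D) + lam / 2 * ‖w‖ ^ 2

noncomputable def unhingedObjective (D : Measure (X × ℝ)) (Φ : X → H) (lam : ℝ) (w : H) : ℝ :=
  (∫ p, (1 - p.2 * ⟪w, Φ p.1⟫) ∂D) + lam / 2 * ‖w‖ ^ 2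

lemma max_zero_one_sub_mul_eq {y s : ℝ} (hy : |y| ≤ 1) (hs : |s| ≤ 1) :
    max 0 (1 - y * s) = 1 - y * s := by
  have : |y * s| ≤ 1 := by rw [abs_mul]; nlinarith [abs_nonneg y, abs_nonneg s]
  exact max_eq_right (sub_nonneg.2 ((le_abs_self _).trans this))

lemma hingeObjective_eq_unhingedObjective {D : Measure (X × ℝ)} {Φ : X → H} {lam : ℝ} {w : H}
    (hlabels : ∀ᵐ p ∂D, p.2 = 1 ∨ p.2 = -1) (hw : ∀ x, |⟪w, Φ x⟫| ≤ 1) :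
    hingeObjective D Φ lam w = unhingedObjective D Φ lam w := by
  rw [hingeObjective, unhingedObjective, integral_congr_ae]
  filter_upwards [hlabels] with p hp
  exact max_zero_one_sub_mul_eq ((abs_eq zero_le_one).2 hp).le (hw p.1)

lemma exists_abs_inner_le_one_and_isMinOn_unhingedObjective [CompleteSpace H]
    [MeasurableSpace H] [BorelSpace H] {D : Measure (X × ℝ)} [IsProbabilityMeasure D]
    {Φ : X → H} (hΦm : Measurable Φ) {R : ℝ} (hΦR : ∀ x, ‖Φ x‖ ≤ R)
    (hlabels : ∀ᵐ p ∂D, p.2 = 1 ∨ p.2 = -1) {lam : ℝ} (hlam : 0 < lam) (hlamR : R ^ 2 ≤ lam) :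
    ∃ u : H, (∀ x, |⟪u, Φ x⟫| ≤ 1) ∧ IsMinOn (unhingedObjective D Φ lam) univ u := by
  have hg : Measurable fun p : X × ℝ => p.2 • Φ p.1 :=
    measurable_snd.smul (hΦm.comp measurable_fst)
  have hgR : ∀ᵐ p ∂D, ‖p.2 • Φ p.1‖ ≤ R := by
    filter_upwards [hlabels] with p hp
    rw [norm_smul, Real.norm_eq_abs, (abs_eq zero_le_one).2 hp, one_mul]
    exact hΦR p.1
  obtain ⟨m, hmR, hm⟩ := exists_norm_le_inner_eq_integral_inner hg hgR
  have hobj : ∀ w, unhingedObjective D Φ lam w = 1 + (lam / 2 * ‖w‖ ^ 2 - ⟪m, w⟫) := fun w => by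
    have hscore : ∀ p : X × ℝ, p.2 * ⟪w, Φ p.1⟫ = ⟪p.2 • Φ p.1, w⟫ := fun p => by
      rw [real_inner_smul_left, real_inner_comm]
    simp only [unhingedObjective, hscore,
      integral_sub (integrable_const 1) (integrable_inner_of_norm_le hg hgR w), ← hm w]
    simp only [integral_const, probReal_univ, smul_eq_mul, mul_one]
    ring
  have hnorm : ‖lam⁻¹ • m‖ ≤ 1 / √lam := by
    rw [norm_smul, Real.norm_of_nonneg (inv_pos.2 hlam).le, ← Real.sqrt_div_self',
      div_eq_inv_mul]
    gcongr
    exact hmR.trans (Real.le_sqrt_of_sq_le hlamR)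
  refine ⟨lam⁻¹ • m, fun x => abs_inner_le_one_of_norm_le_inv_sqrt hnorm (hΦR x) hlamR,
    isMinOn_iff.2 fun w hw => ?_⟩
  rw [hobj, hobj]
  exact (add_le_add_iff_left 1).2
    (isMinOn_iff.1 (isMinOn_half_mul_norm_sq_sub_inner m hlam) w hw)

end Svm

theorem highly_regularised_svm_is_unhinged_general {X H : Type*} [MeasurableSpace X]
    [NormedAddCommGroup H] [InnerProductSpace ℝ H] [CompleteSpace H]
    [MeasurableSpace H] [BorelSpace H]
    (D : Measure (X × ℝ)) [IsProbabilityMeasure D]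
    (Φ : X → H) (hΦm : Measurable Φ)
    (R : ℝ) (hΦR : ∀ x, ‖Φ x‖ ≤ R)
    (hlabels : ∀ᵐ p ∂D, p.2 = 1 ∨ p.2 = -1)
    (lam : ℝ) (hlam : 0 < lam) (hlamR : R ^ 2 ≤ lam)
    (wstar : H)
    (hmin : ∀ w : H,
      (∫ p, max 0 (1 - p.2 * (inner ℝ wstar (Φ p.1) : ℝ)) ∂D) +
          lam / 2 * ‖wstar‖ ^ 2 ≤
        (∫ p, max 0 (1 - p.2 * (inner ℝ w (Φ p.1) : ℝ)) ∂D) +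
          lam / 2 * ‖w‖ ^ 2)
    (hnorm : ‖wstar‖ ≤ 1 / Real.sqrt lam) :
    (∀ x : X, |(inner ℝ wstar (Φ x) : ℝ)| ≤ 1) ∧
    (∀ x : X, ∀ y : ℝ, (y = 1 ∨ y = -1) →
      max 0 (1 - y * (inner ℝ wstar (Φ x) : ℝ)) =
        1 - y * (inner ℝ wstar (Φ x) : ℝ)) ∧
    (∀ w : H,
      (∫ p, (1 - p.2 * (inner ℝ wstar (Φ p.1) : ℝ)) ∂D) +
          lam / 2 * ‖wstar‖ ^ 2 ≤
        (∫ p, (1 - p.2 * (inner ℝ w (Φ p.1) : ℝ)) ∂D) +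
          lam / 2 * ‖w‖ ^ 2) := by
  have hscore : ∀ x, |⟪wstar, Φ x⟫| ≤ 1 := fun x =>
    abs_inner_le_one_of_norm_le_inv_sqrt hnorm (hΦR x) hlamR
  refine ⟨hscore,
    fun x y hy => max_zero_one_sub_mul_eq ((abs_eq zero_le_one).2 hy).le (hscore x), fun w => ?_⟩
  obtain ⟨u, hu, hu_min⟩ :=
    exists_abs_inner_le_one_and_isMinOn_unhingedObjective hΦm hΦR hlabels hlam hlamR
  calc unhingedObjective D Φ lam wstar
      = hingeObjective D Φ lam wstar :=
        (hingeObjective_eq_unhingedObjective hlabels hscore).symm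
    _ ≤ hingeObjective D Φ lam u := hmin u
    _ = unhingedObjective D Φ lam u := hingeObjective_eq_unhingedObjective hlabels hu
    _ ≤ unhingedObjective D Φ lam w := isMinOn_iff.1 hu_min w (mem_univ w)

/-- with features bounded by R, if the minimiser w* of the
regularised hinge objective satisfies ‖w*‖ ≤ 1/√λ and λ ≥ R², then all scores
|⟨w*, Φ(x)⟩| are at most 1, the hinge loss is active at every point
(max(0, 1 − y⟨w*, Φ(x)⟩) = 1 − y⟨w*, Φ(x)⟩ for y ∈ {±1}), and w* also
minimises the regularised unhinged objective. -/
theorem highly_regularised_svm_is_unhinged {X H : Type*} [MeasurableSpace X]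
    [NormedAddCommGroup H] [InnerProductSpace ℝ H] [CompleteSpace H]
    [MeasurableSpace H] [BorelSpace H]
    (D : Measure (X × ℝ)) [IsProbabilityMeasure D]
    (Φ : X → H) (hΦm : Measurable Φ)
    (R : ℝ) (hR : 0 < R) (hΦR : ∀ x, ‖Φ x‖ ≤ R)
    (hlabels : ∀ᵐ p ∂D, p.2 = 1 ∨ p.2 = -1)
    (lam : ℝ) (hlam : 0 < lam) (hlamR : R ^ 2 ≤ lam)
    (wstar : H)
    (hmin : ∀ w : H,
      (∫ p, max 0 (1 - p.2 * (inner ℝ wstar (Φ p.1) : ℝ)) ∂D) +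
          lam / 2 * ‖wstar‖ ^ 2 ≤
        (∫ p, max 0 (1 - p.2 * (inner ℝ w (Φ p.1) : ℝ)) ∂D) +
          lam / 2 * ‖w‖ ^ 2)
    (hnorm : ‖wstar‖ ≤ 1 / Real.sqrt lam) :
    (∀ x : X, |(inner ℝ wstar (Φ x) : ℝ)| ≤ 1) ∧
    (∀ x : X, ∀ y : ℝ, (y = 1 ∨ y = -1) →
      max 0 (1 - y * (inner ℝ wstar (Φ x) : ℝ)) =
        1 - y * (inner ℝ wstar (Φ x) : ℝ)) ∧
    (∀ w : H,
      (∫ p, (1 - p.2 * (inner ℝ wstar (Φ p.1) : ℝ)) ∂D) +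
          lam / 2 * ‖wstar‖ ^ 2 ≤
        (∫ p, (1 - p.2 * (inner ℝ w (Φ p.1) : ℝ)) ∂D) +
          lam / 2 * ‖w‖ ^ 2) :=
  highly_regularised_svm_is_unhinged_general D Φ hΦm R hΦR hlabels lam hlam hlamR wstar hmin hnorm
end
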